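/- If every word accepted by a multistack automaton has its every stack-h call matched within k maximal stack-h contexts (is k-scoped), then the Kleene star of the language of well-matched such words is also k-scoped: (L ∩ WellMatched)* ⊆ k-scoped words. -/

import Mathlib

open Computability

inductive SymKind : Type
  | call | ret | intern
deriving DecidableEq

/-- Stack-semantics matching for stack `h`: scan the word left-to-right,
ignoring all symbols not belonging to stack `h`, pushing call positions of
stack `h` and popping on return positions of stack `h`. -/
def mpairsH {σ : Type*} {n : ℕ} (st : σ → Fin n) (kind : σ → SymKind) (h : Fin n) :
    List σ → ℕ → List ℕ → List (ℕ × ℕ)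
  | [], _, _ => []
  | a :: rest, i, stk =>
    if st a = h then
      match kind a with
      | SymKind.call => mpairsH st kind h rest (i + 1) (i :: stk)
      | SymKind.ret =>
        match stk with
        | [] => mpairsH st kind h rest (i + 1) []
        | c :: stk' => (c, i) :: mpairsH st kind h rest (i + 1) stk'
      | SymKind.intern => mpairsH st kind h rest (i + 1) stk
    else mpairsH st kind h rest (i + 1) stk

/-- `i` and `j` are a matched call–return pair of stack `h` in `w`. -/
def MatchedH {σ : Type*} {n : ℕ} (st : σ → Fin n) (kind : σ → SymKind)
    (h : Fin n) (w : List σ) (i j : ℕ) : Prop :=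
  (i, j) ∈ mpairsH st kind h w 0 []

/-- Position `p` starts a maximal stack-`h` context of `w`. -/
def StartsCtx {σ : Type*} {n : ℕ} (st : σ → Fin n) (h : Fin n) (w : List σ)
    (p : ℕ) : Prop :=
  (∃ a, w[p]? = some a ∧ st a = h) ∧
  (p = 0 ∨ ∀ b, w[p - 1]? = some b → st b ≠ h)

/-- Index (counting from 1) of the maximal stack-`h` context containing or
preceding position `i`: the number of maximal stack-`h` contexts starting at
or before `i`. -/
noncomputable def ctxIdx {σ : Type*} {n : ℕ} (st : σ → Fin n) (h : Fin n)
    (w : List σ) (i : ℕ) : ℕ :=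
  Nat.card {p : ℕ // p ≤ i ∧ StartsCtx st h w p}

/-- `w` is `k`-scoped: every matched return of stack `h` lies within at most
`k` maximal stack-`h` contexts from the one containing its call (inclusive). -/
def KScoped {σ : Type*} {n : ℕ} (st : σ → Fin n) (kind : σ → SymKind) (k : ℕ)
    (w : List σ) : Prop :=
  ∀ (h : Fin n) (i j : ℕ), MatchedH st kind h w i j →
    ctxIdx st h w j < ctxIdx st h w i + k


/-- `w` is well-matched: for every stack, every call position has a matching
return and every return position has a matching call. -/
def WellMatchedAll {σ : Type*} {n : ℕ} (st : σ → Fin n) (kind : σ → SymKind)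
    (w : List σ) : Prop :=
  ∀ h : Fin n,
    (∀ i a, w[i]? = some a → st a = h → kind a = SymKind.call →
      ∃ j, MatchedH st kind h w i j) ∧
    (∀ j a, w[j]? = some a → st a = h → kind a = SymKind.ret →
      ∃ i, MatchedH st kind h w i j)

/-- The language of well-matched words of `L`. -/
def wmLang {σ : Type*} {n : ℕ} (st : σ → Fin n) (kind : σ → SymKind)
    (L : Language σ) : Language σ :=
  {w | w ∈ L ∧ WellMatchedAll st kind w}

/-!
If `u` is well-matched, the scan of `u` ends with an empty stack on every stack `h`, so the
matched pairs of `u ++ v` are those of `u` together with those of `v` shifted by `|u|`.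
Positions inside `u` have the same context index in `u` and in `u ++ v`, and inside `v` the
context indices in `v` and in `u ++ v` differ by a constant; either way the `k`-scoping bound of
a pair carries over. Induction on a factorisation of a word of the Kleene star concludes.
-/

section

variable {σ : Type*} {n : ℕ} (st : σ → Fin n) (kind : σ → SymKind) (h : Fin n)

def stackAfter : List σ → ℕ → List ℕ → List ℕ
  | [], _, stk => stk
  | a :: rest, i, stk =>
    if st a = h then
      match kind a with
      | SymKind.call => stackAfter rest (i + 1) (i :: stk)
      | SymKind.ret => stackAfter rest (i + 1) stk.tail
      | SymKind.intern => stackAfter rest (i + 1) stk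
    else stackAfter rest (i + 1) stk

theorem mpairsH_append (u v : List σ) (i : ℕ) (stk : List ℕ) :
    mpairsH st kind h (u ++ v) i stk =
      mpairsH st kind h u i stk ++
        mpairsH st kind h v (i + u.length) (stackAfter st kind h u i stk) := by
  induction u generalizing i stk with
  | nil => simp [mpairsH, stackAfter]
  | cons a rest ih =>
    by_cases hs : st a = h
    · cases hk : kind a <;> [skip; cases stk; skip] <;>
        simp [mpairsH, stackAfter, hs, hk, ih, Nat.add_right_comm, Nat.add_assoc]
    · simp [mpairsH, stackAfter, hs, ih, Nat.add_right_comm, Nat.add_assoc]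

theorem mpairsH_shift (v : List σ) (i d : ℕ) (stk : List ℕ) :
    mpairsH st kind h v (i + d) (stk.map (· + d)) =
      (mpairsH st kind h v i stk).map (fun p => (p.1 + d, p.2 + d)) := by
  induction v generalizing i stk with
  | nil => simp [mpairsH]
  | cons a rest ih =>
    have ih' := fun stk => ih (i + 1) stk
    rw [Nat.add_right_comm] at ih'
    by_cases hs : st a = h
    · cases hk : kind a <;> [skip; cases stk; skip] <;> simp [mpairsH, hs, hk, ← ih']
    · simp [mpairsH, hs, ← ih']

theorem mpairsH_bounds (u : List σ) (i : ℕ) (stk : List ℕ) (hstk : ∀ c ∈ stk, c < i)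
    {a b : ℕ} (hab : (a, b) ∈ mpairsH st kind h u i stk) : a < b ∧ b < i + u.length := by
  induction u generalizing i stk with
  | nil => simp [mpairsH] at hab
  | cons x rest ih =>
    have step : ∀ stk' : List ℕ, (∀ c ∈ stk', c < i + 1) →
        (a, b) ∈ mpairsH st kind h rest (i + 1) stk' → a < b ∧ b < i + (x :: rest).length :=
      fun stk' hstk' hab' => by grind
    by_cases hs : st x = h
    · cases hk : kind x <;> [skip; cases stk; skip] <;>
        simp only [mpairsH, hs, hk, if_true, List.mem_cons, Prod.mk.injEq] at hab
      · exact step _ (by grind) hab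
      · exact step _ (by grind) hab
      · rcases hab with ⟨rfl, rfl⟩ | hab
        · exact ⟨hstk a List.mem_cons_self, by simp⟩
        · exact step _ (by grind) hab
      · exact step _ (by grind) hab
    · simp only [mpairsH, hs, if_false] at hab
      exact step _ (by grind) hab

def IsCallAt (w : List σ) (p : ℕ) : Prop :=
  ∃ a ∈ w[p]?, st a = h ∧ kind a = SymKind.call

instance (w : List σ) : DecidablePred (IsCallAt st kind h w) :=
  fun _ => inferInstanceAs (Decidable (∃ _ ∈ _, _))

theorem count_isCallAt_cons (a : σ) (w : List σ) :
    Nat.count (IsCallAt st kind h (a :: w)) (w.length + 1) =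
      Nat.count (IsCallAt st kind h w) w.length +
        if st a = h ∧ kind a = SymKind.call then 1 else 0 := by
  rw [Nat.count_succ']
  congr 1
  simp [IsCallAt]

theorem length_stackAfter_add_length_mpairsH (u : List σ) (i : ℕ) (stk : List ℕ) :
    (stackAfter st kind h u i stk).length + (mpairsH st kind h u i stk).length =
      stk.length + Nat.count (IsCallAt st kind h u) u.length := by
  induction u generalizing i stk with
  | nil => simp [mpairsH, stackAfter]
  | cons a rest ih =>
    rw [List.length_cons, count_isCallAt_cons]
    by_cases hs : st a = h
    · cases hk : kind a <;> [skip; cases stk; skip] <;>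
        simp [mpairsH, stackAfter, hs, hk, ih] <;> grind
    · simp [mpairsH, stackAfter, hs, ih]

theorem count_isCallAt_le_length_mpairsH (u : List σ)
    (hcall : ∀ p a, u[p]? = some a → st a = h → kind a = SymKind.call →
      ∃ j, MatchedH st kind h u p j) :
    Nat.count (IsCallAt st kind h u) u.length ≤ (mpairsH st kind h u 0 []).length := by
  classical
  rw [Nat.count_eq_card_filter_range]
  calc _ ≤ ((mpairsH st kind h u 0 []).map Prod.fst).toFinset.card := by
        refine Finset.card_le_card fun p hp => ?_
        obtain ⟨-, a, ha, hst, hk⟩ := Finset.mem_filter.mp hp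
        obtain ⟨j, hj⟩ := hcall p a ha hst hk
        exact List.mem_toFinset.mpr (List.mem_map.mpr ⟨(p, j), hj, rfl⟩)
    _ ≤ _ := (List.toFinset_card_le _).trans_eq (List.length_map _)

/-- Each call is pushed once and each matched pair pops one, so
`|final stack| + #pairs = #calls`; if every call is matched, `#calls ≤ #pairs`. -/
theorem stackAfter_eq_nil (u : List σ)
    (hcall : ∀ p a, u[p]? = some a → st a = h → kind a = SymKind.call →
      ∃ j, MatchedH st kind h u p j) :
    stackAfter st kind h u 0 [] = [] := by
  have hlen := length_stackAfter_add_length_mpairsH st kind h u 0 []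
  have hle := count_isCallAt_le_length_mpairsH st kind h u hcall
  rw [List.length_nil] at hlen
  exact List.length_eq_zero_iff.mp (by omega)

theorem matchedH_append {u : List σ} (v : List σ) (hu : stackAfter st kind h u 0 [] = [])
    {i j : ℕ} (hm : MatchedH st kind h (u ++ v) i j) :
    MatchedH st kind h u i j ∨
      ∃ i' j', MatchedH st kind h v i' j' ∧ i = u.length + i' ∧ j = u.length + j' := by
  have hshift := mpairsH_shift st kind h v 0 u.length []
  rw [List.map_nil, Nat.zero_add] at hshift
  unfold MatchedH at hm ⊢
  rw [mpairsH_append, hu, Nat.zero_add, hshift, List.mem_append, List.mem_map] at hm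
  rcases hm with hm | ⟨⟨i', j'⟩, hm, heq⟩
  · exact Or.inl hm
  · obtain ⟨rfl, rfl⟩ := Prod.mk.inj heq
    exact Or.inr ⟨i', j', hm, Nat.add_comm _ _, Nat.add_comm _ _⟩

theorem ctxIdx_eq_count (w : List σ) [DecidablePred (StartsCtx st h w)] (i : ℕ) :
    ctxIdx st h w i = Nat.count (StartsCtx st h w) (i + 1) := by
  rw [Nat.count_eq_card_filter_range, ← Nat.card_eq_finsetCard]
  exact Nat.card_congr (Equiv.subtypeEquivRight fun p => by simp)

theorem startsCtx_append_left {u : List σ} (v : List σ) {p : ℕ} (hp : p < u.length) :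
    StartsCtx st h (u ++ v) p ↔ StartsCtx st h u p := by
  rw [StartsCtx, StartsCtx, List.getElem?_append_left hp,
    List.getElem?_append_left (by omega : p - 1 < u.length)]

theorem startsCtx_append_right (u : List σ) {v : List σ} {p : ℕ} (hp : 0 < p) :
    StartsCtx st h (u ++ v) (u.length + p) ↔ StartsCtx st h v p := by
  rw [StartsCtx, StartsCtx, List.getElem?_append_right (by omega),
    List.getElem?_append_right (by omega), Nat.add_sub_cancel_left,
    show u.length + p - 1 - u.length = p - 1 by omega]
  simp only [Nat.add_eq_zero_iff, hp.ne', and_false, false_or]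

theorem ctxIdx_append_of_lt {u : List σ} (v : List σ) {j : ℕ} (hj : j < u.length) :
    ctxIdx st h (u ++ v) j = ctxIdx st h u j :=
  Nat.card_congr <| Equiv.subtypeEquivRight fun _ =>
    and_congr_right fun hpj => startsCtx_append_left st h v (by omega)

/-- Position `u.length` may start a context of `v` but not of `u ++ v`, so only differences of
context indices transfer from `v` to `u ++ v`. -/
theorem ctxIdx_append_add (u v : List σ) (j : ℕ) :
    ctxIdx st h (u ++ v) (u.length + j) + ctxIdx st h v 0 =
      ctxIdx st h (u ++ v) u.length + ctxIdx st h v j := by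
  classical
  simp only [ctxIdx_eq_count, Nat.zero_add]
  rw [Nat.add_right_comm, Nat.count_add _ (u.length + 1) j, Nat.add_comm j 1, Nat.count_add _ 1 j]
  have hshift : ∀ k, StartsCtx st h (u ++ v) (u.length + (1 + k)) ↔ StartsCtx st h v (1 + k) :=
    fun k => startsCtx_append_right st h u (by omega)
  simp_rw [Nat.add_assoc, hshift]
  omega

theorem KScoped.nil (k : ℕ) : KScoped st kind k ([] : List σ) := by
  intro h i j hm
  simp [MatchedH, mpairsH] at hm

variable {st kind} in
theorem KScoped.append {k : ℕ} {u v : List σ} (hku : KScoped st kind k u)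
    (hu : ∀ h, stackAfter st kind h u 0 [] = []) (hkv : KScoped st kind k v) :
    KScoped st kind k (u ++ v) := by
  intro h i j hm
  rcases matchedH_append st kind h v (hu h) hm with hm | ⟨i', j', hv, rfl, rfl⟩
  · have hij := mpairsH_bounds st kind h u 0 [] (by simp) hm
    rw [ctxIdx_append_of_lt st h v (by omega), ctxIdx_append_of_lt st h v (by omega)]
    exact hku h i j hm
  · have hi := ctxIdx_append_add st h u v i'
    have hj := ctxIdx_append_add st h u v j'
    have := hkv h i' j' hv
    omega

end

/-- If every word of `L` is `k`-scoped, then every word of the Kleene star of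
the language of well-matched words of `L` is `k`-scoped. -/
theorem kstar_kscoped {σ : Type*} {n : ℕ} (st : σ → Fin n)
    (kind : σ → SymKind) (k : ℕ) (L : Language σ)
    (hL : ∀ w ∈ L, KScoped st kind k w) :
    ∀ w ∈ (wmLang st kind L)∗, KScoped st kind k w := by
  rintro _ ⟨S, rfl, hS⟩
  induction S with
  | nil => exact KScoped.nil st kind k
  | cons u S ih =>
    obtain ⟨huL, huwm⟩ := hS u List.mem_cons_self
    exact (hL u huL).append (fun h => stackAfter_eq_nil st kind h u (huwm h).1)
      (ih fun v hv => hS v (List.mem_cons_of_mem u hv))
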